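/- arXiv:1705.10833 — 4 statements merged into one kernel-verified Lean document; each statement's English description precedes it below -/
import Mathlib

section
/- Let A be an algebra whose congruence lattice D = Con(A) is finite, and let u ≠ v be elements of A. Then there exists a finite sequence u = w_0, w_1, ..., w_k = v of elements of A such that for every i < k, the principal congruence con(w_i, w_{i+1}) is join-irreducible in D. -/
set_option linter.unusedVariables false

/-- A general (finitary, one-sorted) algebra. -/
structure Alg : Type 1 where
  carrier : Type
  ι : Type
  arity : ι → ℕ
  ops : ∀ i : ι, (Fin (arity i) → carrier) → carrier

/-- A congruence of an algebra: an equivalence relation compatible with all operations. -/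
def IsCong (A : Alg) (r : A.carrier → A.carrier → Prop) : Prop :=
  Equivalence r ∧ ∀ (i : A.ι) (x y : Fin (A.arity i) → A.carrier),
    (∀ j, r (x j) (y j)) → r (A.ops i x) (A.ops i y)

/-- The congruences of an algebra `A`. -/
def AlgCon (A : Alg) : Type := {r : A.carrier → A.carrier → Prop // IsCong A r}

instance (A : Alg) : PartialOrder (AlgCon A) where
  le r s := ∀ a b, r.1 a b → s.1 a b
  le_refl r a b h := h
  le_trans r s t h1 h2 a b h := h2 a b (h1 a b h)
  le_antisymm r s h1 h2 := Subtype.ext (by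
    funext a b
    exact propext ⟨h1 a b, h2 a b⟩)

instance (A : Alg) : InfSet (AlgCon A) where
  sInf S := ⟨fun a b => ∀ r ∈ S, r.1 a b,
    ⟨⟨fun a r _ => r.2.1.refl a,
      fun h r hr => r.2.1.symm (h r hr),
      fun h1 h2 r hr => r.2.1.trans (h1 r hr) (h2 r hr)⟩,
     fun i x y h r hr => r.2.2 i x y (fun j => h j r hr)⟩⟩

instance (A : Alg) : CompleteLattice (AlgCon A) :=
  completeLatticeOfInf _ (fun S =>
    ⟨fun r hr a b h => h r hr, fun r hr a b h s hs => hr hs a b h⟩)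

/-- The principal congruence generated by the pair `(a, b)`. -/
def algPrinc (A : Alg) (a b : A.carrier) : AlgCon A := sInf {r : AlgCon A | r.1 a b}

/-- The set of principal congruences of `A`. -/
def AlgPrinc (A : Alg) : Set (AlgCon A) := {θ | ∃ a b, θ = algPrinc A a b}

/-! Induct on `con(u, v)` in the finite lattice `Con(A)`. If it is not join-irreducible it is
`β ⊔ γ` with `β, γ < con(u, v)`, and since the join of two congruences is the transitive closure
of their union, `u` and `v` are linked by steps `(x, y)` lying in `β` or in `γ`; each such step
has `con(x, y) < con(u, v)`, so the induction hypothesis refines it into join-irreducible steps. -/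

open Function Relation

theorem Relation.ReflTransGen.lift_pi {ι α β : Type*} [Finite ι] [DecidableEq ι]
    {r : α → α → Prop} {p : β → β → Prop} (F : (ι → α) → β)
    (hF : ∀ f j a b, r a b → p (F (update f j a)) (F (update f j b)))
    {x y : ι → α} (h : ∀ j, ReflTransGen r (x j) (y j)) : ReflTransGen p (F x) (F y) := by
  have := Fintype.ofFinite ι
  suffices key : ∀ s : Finset ι, ∀ x : ι → α, (∀ j, ReflTransGen r (x j) (y j)) →
      (∀ j ∉ s, x j = y j) → ReflTransGen p (F x) (F y) from
    key Finset.univ x h (by simp)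
  intro s
  induction s using Finset.induction_on with
  | empty =>
    intro x _ hxy
    rw [funext fun j => hxy j (Finset.notMem_empty j)]
  | insert j s _ ih =>
    intro x hx hxy
    have hstep : ReflTransGen p (F x) (F (update x j (y j))) := by
      simpa only [onFun, update_eq_self] using
        ReflTransGen.lift (fun a => F (update x j a)) (hF x j) _ _ (hx j)
    refine hstep.trans (ih _ (fun i => ?_) (fun i hi => ?_))
    · rcases eq_or_ne i j with rfl | hij
      · simp only [update_self]
        rfl
      · simpa [hij] using hx i
    · rcases eq_or_ne i j with rfl | hij
      · simp
      · simpa [hij] using hxy i (by simp [hij, hi])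

theorem Relation.ReflTransGen.exists_fin_path {α : Type*} {r : α → α → Prop} {a b : α}
    (h : ReflTransGen r a b) :
    ∃ (k : ℕ) (w : Fin (k + 1) → α), w 0 = a ∧ w (Fin.last k) = b ∧
      ∀ i : Fin k, r (w i.castSucc) (w i.succ) := by
  obtain ⟨l, hchain, hlast⟩ := List.exists_isChain_cons_of_relationReflTransGen h
  refine ⟨l.length, fun i => (a :: l)[i], rfl, ?_, fun i => hchain.getElem i (by simp)⟩
  simpa [List.getLast_eq_getElem] using hlast

namespace AlgCon

variable {A : Alg}

theorem eq_of_rel_bot {a b : A.carrier} (h : (⊥ : AlgCon A).1 a b) : a = b :=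
  bot_le (α := AlgCon A) (a := ⟨Eq, eq_equivalence, fun _ _ _ h => congrArg _ (funext h)⟩) a b h

theorem rel_ops_update (θ : AlgCon A) (i : A.ι) (f : Fin (A.arity i) → A.carrier)
    (j : Fin (A.arity i)) {a b : A.carrier} (h : θ.1 a b) :
    θ.1 (A.ops i (update f j a)) (A.ops i (update f j b)) :=
  θ.2.2 i _ _ fun m => by
    rcases eq_or_ne m j with rfl | hm
    · simpa using h
    · simpa [hm] using θ.2.1.refl (f m)

theorem isCong_reflTransGen_or (β γ : AlgCon A) :
    IsCong A (ReflTransGen fun x y => β.1 x y ∨ γ.1 x y) := by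
  refine ⟨⟨fun _ => .refl, fun h => ?_, .trans⟩, fun i x y h => ?_⟩
  · have : Std.Symm fun x y => β.1 x y ∨ γ.1 x y :=
      ⟨fun _ _ hxy => hxy.imp (β.2.1.symm ·) (γ.2.1.symm ·)⟩
    exact Std.Symm.symm _ _ h
  · refine ReflTransGen.lift_pi (A.ops i) (fun f j a b hab => ?_) h
    exact hab.imp (β.rel_ops_update i f j) (γ.rel_ops_update i f j)

theorem reflTransGen_of_rel_sup {β γ : AlgCon A} {x y : A.carrier} (h : (β ⊔ γ).1 x y) :
    ReflTransGen (fun x y => β.1 x y ∨ γ.1 x y) x y :=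
  (show β ⊔ γ ≤ ⟨_, isCong_reflTransGen_or β γ⟩ from
    sup_le (fun _ _ h => .single (.inl h)) (fun _ _ h => .single (.inr h))) x y h

end AlgCon

section Principal

variable {A : Alg}

theorem algPrinc_le_iff {a b : A.carrier} {θ : AlgCon A} : algPrinc A a b ≤ θ ↔ θ.1 a b :=
  ⟨fun h => h a b fun _ hr => hr, fun h _ _ hxy => hxy θ h⟩

theorem eq_of_algPrinc_eq_bot {a b : A.carrier} (h : algPrinc A a b = ⊥) : a = b :=
  AlgCon.eq_of_rel_bot (algPrinc_le_iff.1 h.le)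

theorem reflTransGen_supIrred_algPrinc [Finite (AlgCon A)] (u v : A.carrier) :
    ReflTransGen (fun a b => SupIrred (algPrinc A a b)) u v := by
  induction hθ : algPrinc A u v using WellFoundedLT.induction generalizing u v with
  | ind θ ih =>
    by_cases hirr : SupIrred θ
    · exact .single (hθ ▸ hirr)
    obtain hmin | ⟨β, γ, rfl, hβ, hγ⟩ := not_supIrred.1 hirr
    · rw [hmin.eq_bot] at hθ
      rw [eq_of_algPrinc_eq_bot hθ]
    · refine reflTransGen_closed (fun x y hxy => ih _ ?_ x y rfl) u v
        (AlgCon.reflTransGen_of_rel_sup (algPrinc_le_iff.1 hθ.le))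
      rcases hxy with h | h
      · exact (algPrinc_le_iff.2 h).trans_lt hβ
      · exact (algPrinc_le_iff.2 h).trans_lt hγ

end Principal

theorem stmt_5_general (A : Alg) [Finite (AlgCon A)] (u v : A.carrier) :
    ∃ (k : ℕ) (w : Fin (k + 1) → A.carrier), w 0 = u ∧ w (Fin.last k) = v ∧
      ∀ i : Fin k, SupIrred (algPrinc A (w i.castSucc) (w i.succ)) :=
  (reflTransGen_supIrred_algPrinc u v).exists_fin_path

/-- In an algebra with finite congruence lattice, any two distinct elements are
connected by a finite sequence of elements in which consecutive members generate
join-irreducible principal congruences. -/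
theorem stmt_5 (A : Alg) [Finite (AlgCon A)] (u v : A.carrier) (huv : u ≠ v) :
    ∃ (k : ℕ) (w : Fin (k + 1) → A.carrier), w 0 = u ∧ w (Fin.last k) = v ∧
      ∀ i : Fin k, SupIrred (algPrinc A (w i.castSucc) (w i.succ)) :=
  stmt_5_general A u v
end

section
/- Let D be a finite distributive lattice with at least two elements that has exactly two coatoms. Then there is no algebra A such that Con(A) ≅ D via an isomorphism mapping Princ(A) onto D \ {1_D}. -/
set_option linter.unusedVariables false

/-!
Since `1_D` is not principal, every principal congruence `Θ(x, y)` lies below one of the two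
coatoms, i.e. `(x, y)` belongs to one of the two coatom congruences `θ₁, θ₂`. So `θ₁ ∪ θ₂` is
the total relation. But if the union of two equivalence relations `r, s` is total, one of them
is: if `(a, b) ∉ r`, then for every `x` one of `(a, x), (b, x)` lies outside `r`, hence in `s`,
and since `(a, b) ∈ s` this gives `(a, x) ∈ s` for all `x`.
-/

theorem Equivalence.forall_or_forall_of_forall_or {α : Type*} {r s : α → α → Prop}
    (hr : Equivalence r) (hs : Equivalence s) (h : ∀ x y, r x y ∨ s x y) :
    (∀ x y, r x y) ∨ ∀ x y, s x y := by
  refine or_iff_not_imp_left.2 fun hr_total => ?_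
  obtain ⟨a, b, hab⟩ : ∃ a b, ¬ r a b := by simpa using hr_total
  have hs_ab : s a b := (h a b).resolve_left hab
  have hs_a (x : α) : s a x := by
    rcases h a x with hax | hax
    · have hbx : ¬ r b x := fun hbx => hab (hr.trans hax (hr.symm hbx))
      exact hs.trans hs_ab ((h b x).resolve_left hbx)
    · exact hax
  exact fun x y => hs.trans (hs.symm (hs_a x)) (hs_a y)

theorem le_or_le_of_ne_top_of_coatoms_subset {D : Type*} [PartialOrder D] [OrderTop D]
    [IsCoatomic D] {c₁ c₂ : D} (honly : ∀ x : D, IsCoatom x → x = c₁ ∨ x = c₂) {x : D}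
    (hx : x ≠ ⊤) : x ≤ c₁ ∨ x ≤ c₂ := by
  obtain ⟨c, hc, hxc⟩ := (eq_top_or_exists_le_coatom x).resolve_left hx
  rcases honly c hc with rfl | rfl
  exacts [Or.inl hxc, Or.inr hxc]

namespace AlgCon

variable {A : Alg}

theorem algPrinc_le_iff {r : AlgCon A} {x y : A.carrier} : algPrinc A x y ≤ r ↔ r.1 x y :=
  ⟨fun h => h x y fun _ hs => hs, fun h _ _ hab => hab r h⟩

theorem eq_top_of_forall_rel {r : AlgCon A} (h : ∀ x y, r.1 x y) : r = ⊤ :=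
  top_unique fun x y _ => h x y

end AlgCon

theorem stmt_7_general {D : Type} [DistribLattice D] [Fintype D] [BoundedOrder D]
    (c₁ c₂ : D)
    (h₁ : IsCoatom c₁) (h₂ : IsCoatom c₂)
    (honly : ∀ x : D, IsCoatom x → x = c₁ ∨ x = c₂) :
    ¬ ∃ (A : Alg) (φ : AlgCon A ≃o D),
        (φ : AlgCon A → D) '' (AlgPrinc A) = {x : D | x ≠ ⊤} := by
  rintro ⟨A, φ, hset⟩
  have hproper (x y : A.carrier) : φ (algPrinc A x y) ≠ ⊤ :=
    hset.subset ⟨_, ⟨x, y, rfl⟩, rfl⟩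
  have hcover (x y : A.carrier) : (φ.symm c₁).1 x y ∨ (φ.symm c₂).1 x y := by
    simp only [← AlgCon.algPrinc_le_iff, φ.le_symm_apply]
    exact le_or_le_of_ne_top_of_coatoms_subset honly (hproper x y)
  have not_total {c : D} (hc : IsCoatom c) (htotal : ∀ x y, (φ.symm c).1 x y) : False :=
    hc.1 (by simpa using congrArg φ (AlgCon.eq_top_of_forall_rel htotal))
  rcases (φ.symm c₁).2.1.forall_or_forall_of_forall_or (φ.symm c₂).2.1 hcover with h | h
  exacts [not_total h₁ h, not_total h₂ h]

/-- A finite distributive lattice `D` with at least two elements and exactly two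
coatoms: no algebra represents the inclusion `D \ {⊤} ⊆ D` by principal congruences. -/
theorem stmt_7 {D : Type} [DistribLattice D] [Fintype D] [BoundedOrder D]
    [Nontrivial D] (c₁ c₂ : D) (hne : c₁ ≠ c₂)
    (h₁ : IsCoatom c₁) (h₂ : IsCoatom c₂)
    (honly : ∀ x : D, IsCoatom x → x = c₁ ∨ x = c₂) :
    ¬ ∃ (A : Alg) (φ : AlgCon A ≃o D),
        (φ : AlgCon A → D) '' (AlgPrinc A) = {x : D | x ≠ ⊤} :=
  stmt_7_general c₁ c₂ h₁ h₂ honly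
end

section
/- With C, D, σ, 𝔄, and the isomorphism φ: D → Con(𝔄) as in the forcing-algebra construction, for every prime interval p of C the principal congruence con(0_p, 1_p) of 𝔄 equals φ(σ(p)). -/
set_option linter.unusedVariables false

open scoped Classical

/-- The prime intervals (covering pairs) of an ordered set `C`. -/
abbrev PrimeInt (C : Type) [Preorder C] : Type := {e : C × C // e.1 ⋖ e.2}

/-- The element of `D` represented by the interval `[a, b]` of the colored chain:
the join of the colors of all prime intervals lying inside `[a, b]`. -/
noncomputable def chainRep {C D : Type} [LinearOrder C] [Fintype C]
    [Lattice D] [OrderBot D] (σ : PrimeInt C → D) (a b : C) : D :=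
  (Finset.univ.filter (fun e : PrimeInt C => a ≤ e.1.1 ∧ e.1.2 ≤ b)).sup σ

/-- The subset of `D` represented by the colored chain `(C, σ)`. -/
noncomputable def repSet {C D : Type} [LinearOrder C] [Fintype C]
    [Lattice D] [OrderBot D] (σ : PrimeInt C → D) : Set D :=
  {x : D | ∃ a b : C, a ≤ b ∧ x = chainRep σ a b}
/-- The contraction map of the interval `[u, v]` of a chain. -/
def contraction {C : Type} [LinearOrder C] (u v : C) (x : C) : C :=
  if v ≤ x then v else if u ≤ x then x else u

/-- The forcing map `f_{p,h}` associated with two distinct prime intervals `p`, `h`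
of a chain: elements of the interior set between `p` and `h` are sent to the
endpoint of `h` adjacent to the interior set, all other elements to the other
endpoint of `h`. -/
def forcing {C : Type} [LinearOrder C] (p h : PrimeInt C) (x : C) : C :=
  if p.1.2 ≤ h.1.1 then (if p.1.2 ≤ x ∧ x ≤ h.1.1 then h.1.1 else h.1.2)
  else (if h.1.2 ≤ x ∧ x ≤ p.1.1 then h.1.2 else h.1.1)

/-- The unary "forcing algebra" on the chain `C`, whose operations are all
contractions `g_{uv}` for `u < v` and all forcing maps `f_{p,h}` for distinct
prime intervals with `σ(p) ≥ σ(h)`. -/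
def forcingAlg (C : Type) [LinearOrder C] {D : Type} [Lattice D]
    (σ : PrimeInt C → D) : Alg where
  carrier := C
  ι := {uv : C × C // uv.1 < uv.2} ⊕
    {ph : PrimeInt C × PrimeInt C // ph.1 ≠ ph.2 ∧ σ ph.2 ≤ σ ph.1}
  arity _ := 1
  ops i x :=
    match i with
    | Sum.inl uv => contraction uv.1.1 uv.1.2 (x 0)
    | Sum.inr ph => forcing ph.1.1 ph.1.2 (x 0)


/-! An equivalence relation on the finite chain `C` is determined by the prime
intervals it collapses, and `φ(σ p)` collapses exactly those `h` with `σ h ≤ σ p`. This `φ(σ p)`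
is a congruence: a contraction maps a segment `[a, b]` into itself or to a point, and a forcing
`f_{p',h'}` separates `a` from `b` only if `[a, b]` spans `p'` or `h'`, both coloured at least
`σ h'`. Conversely, `f_{p,h}` maps `(0_p, 1_p)` to `(1_h, 0_h)`, so `con(0_p, 1_p)` collapses
every `h` with `σ h ≤ σ p`, hence all of `φ(σ p)`. -/

theorem algPrinc_rel (A : Alg) (a b : A.carrier) : (algPrinc A a b).1 a b :=
  fun _ hr => hr

theorem algPrinc_le {A : Alg} {a b : A.carrier} {θ : AlgCon A} (h : θ.1 a b) :
    algPrinc A a b ≤ θ :=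
  sInf_le h

theorem Equivalence.rel_of_le_of_forall_covBy {α : Type*} [PartialOrder α] [LocallyFiniteOrder α]
    {r : α → α → Prop} (hr : Equivalence r) {a b : α} (hab : a ≤ b)
    (h : ∀ x y, x ⋖ y → a ≤ x → y ≤ b → r x y) : r a b := by
  suffices ∀ y, Relation.ReflTransGen (· ⋖ ·) a y → y ≤ b → r a y from
    this b (le_iff_reflTransGen_covBy.1 hab) le_rfl
  intro y hay
  induction hay with
  | refl => exact fun _ => hr.refl a
  | tail hax hxy ih =>
    exact fun hyb => hr.trans (ih (hxy.le.trans hyb))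
      (h _ _ hxy (le_iff_reflTransGen_covBy.2 hax) hyb)

section Chain

variable {C : Type} [LinearOrder C]

theorem PrimeInt.eq_of_le_of_le {q h : PrimeInt C} (h1 : h.1.1 ≤ q.1.1) (h2 : q.1.2 ≤ h.1.2) :
    q = h :=
  Subtype.ext <| Prod.ext (le_antisymm (h.2.le_of_lt (q.2.lt.trans_le h2)) h1)
    (le_antisymm h2 (h.2.ge_of_gt (h1.trans_lt q.2.lt)))

theorem PrimeInt.snd_le_fst_of_ne {p h : PrimeInt C} (hne : p ≠ h) (hph : ¬p.1.2 ≤ h.1.1) :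
    h.1.2 ≤ p.1.1 := by
  have hhp : h.1.1 < p.1.2 := lt_of_not_ge hph
  rcases (p.2.le_of_lt hhp).eq_or_lt with heq | hlt
  · exact absurd (eq_of_le_of_le heq.ge (h.2.ge_of_gt hhp)).symm hne
  · exact h.2.ge_of_gt hlt

theorem PrimeInt.spans_or_of_mem_of_not_mem {e e' : PrimeInt C} {a b : C}
    (ha : e.1.2 ≤ a ∧ a ≤ e'.1.1) (hb : ¬(e.1.2 ≤ b ∧ b ≤ e'.1.1)) :
    (a ⊓ b ≤ e.1.1 ∧ e.1.2 ≤ a ⊔ b) ∨ (a ⊓ b ≤ e'.1.1 ∧ e'.1.2 ≤ a ⊔ b) := by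
  rcases not_and_or.1 hb with hb | hb
  · exact .inl ⟨inf_le_right.trans (e.2.le_of_lt (lt_of_not_ge hb)), ha.1.trans le_sup_left⟩
  · exact .inr ⟨inf_le_left.trans ha.2, (e'.2.ge_of_gt (lt_of_not_ge hb)).trans le_sup_right⟩

theorem contraction_eq_max_min {u v : C} (huv : u ≤ v) (x : C) :
    contraction u v x = max u (min x v) := by
  unfold contraction
  split_ifs with hv hu
  · rw [min_eq_right hv, max_eq_right huv]
  · rw [min_eq_left (le_of_not_ge hv), max_eq_right hu]
  · rw [min_eq_left (le_of_not_ge hv), max_eq_left (le_of_not_ge hu)]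

theorem contraction_monotone {u v : C} (huv : u ≤ v) : Monotone (contraction u v) := by
  intro a b hab
  simp only [contraction_eq_max_min huv]
  exact max_le_max le_rfl (min_le_min_right v hab)

theorem contraction_eq_or_le_of_le {u v a b : C} (huv : u ≤ v) (hab : a ≤ b) :
    contraction u v a = contraction u v b ∨
      a ≤ contraction u v a ∧ contraction u v b ≤ b := by
  simp only [contraction_eq_max_min huv]
  by_cases hva : v ≤ a
  · exact .inl (by rw [min_eq_right hva, min_eq_right (hva.trans hab)])
  by_cases hbu : b ≤ u
  · exact .inl (by rw [max_eq_left ((min_le_left a v).trans (hab.trans hbu)),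
      max_eq_left ((min_le_left b v).trans hbu)])
  refine .inr ⟨?_, ?_⟩
  · exact (le_min le_rfl (le_of_not_ge hva)).trans (le_max_right u _)
  · exact max_le (le_of_not_ge hbu) (min_le_left b v)

theorem forcing_fst_of_ne {p h : PrimeInt C} (hne : p ≠ h) : forcing p h p.1.1 = h.1.2 := by
  by_cases hph : p.1.2 ≤ h.1.1
  · rw [forcing, if_pos hph, if_neg fun hp => p.2.lt.not_ge hp.1]
  · rw [forcing, if_neg hph, if_pos ⟨PrimeInt.snd_le_fst_of_ne hne hph, le_rfl⟩]

theorem forcing_snd (p h : PrimeInt C) : forcing p h p.1.2 = h.1.1 := by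
  by_cases hph : p.1.2 ≤ h.1.1
  · rw [forcing, if_pos hph, if_pos ⟨le_rfl, hph⟩]
  · rw [forcing, if_neg hph, if_neg fun hp => p.2.lt.not_ge hp.2]

end Chain

section Phi

variable {C : Type} [LinearOrder C] {D : Type}

/-- `phiRel σ x` is the relation `φ(x)`. -/
def phiRel [LE D] (σ : PrimeInt C → D) (x : D) (u v : C) : Prop :=
  ∀ q : PrimeInt C, u ⊓ v ≤ q.1.1 → q.1.2 ≤ u ⊔ v → σ q ≤ x

section Preorder

variable [Preorder D] {σ : PrimeInt C → D} {x : D} {a b c : C}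

theorem phiRel_refl (a : C) : phiRel σ x a a := fun q h1 h2 => by
  rw [inf_idem] at h1
  rw [sup_idem] at h2
  exact absurd (h2.trans h1) q.2.lt.not_ge

theorem phiRel.symm (h : phiRel σ x a b) : phiRel σ x b a := fun q h1 h2 =>
  h q (inf_comm b a ▸ h1) (sup_comm b a ▸ h2)

theorem phiRel.trans (hab : phiRel σ x a b) (hbc : phiRel σ x b c) : phiRel σ x a c := by
  intro q h1 h2
  by_cases hb : b ≤ q.1.1
  · rcases le_sup_iff.1 h2 with h2 | h2
    · exact hab q (inf_le_right.trans hb) (h2.trans le_sup_left)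
    · exact hbc q (inf_le_left.trans hb) (h2.trans le_sup_right)
  · have hqb : q.1.2 ≤ b := q.2.ge_of_gt (lt_of_not_ge hb)
    rcases inf_le_iff.1 h1 with h1 | h1
    · exact hab q (inf_le_left.trans h1) (hqb.trans le_sup_right)
    · exact hbc q (inf_le_right.trans h1) (hqb.trans le_sup_left)

theorem phiRel_equivalence (σ : PrimeInt C → D) (x : D) : Equivalence (phiRel σ x) :=
  ⟨phiRel_refl, phiRel.symm, phiRel.trans⟩

theorem phiRel.mono {c d : C} (h : phiRel σ x a b) (hinf : a ⊓ b ≤ c ⊓ d) (hsup : c ⊔ d ≤ a ⊔ b) :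
    phiRel σ x c d := fun q h1 h2 =>
  h q (hinf.trans h1) (h2.trans hsup)

theorem phiRel_iff_of_covBy (q : PrimeInt C) : phiRel σ x q.1.1 q.1.2 ↔ σ q ≤ x := by
  refine ⟨fun h => h q inf_le_left le_sup_right, fun h q' h1 h2 => ?_⟩
  rw [inf_eq_left.2 q.2.le] at h1
  rw [sup_eq_right.2 q.2.le] at h2
  rwa [PrimeInt.eq_of_le_of_le h1 h2]

theorem phiRel_iff_of_le (hab : a ≤ b) :
    phiRel σ x a b ↔ ∀ q : PrimeInt C, a ≤ q.1.1 → q.1.2 ≤ b → σ q ≤ x := by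
  rw [phiRel, inf_eq_left.2 hab, sup_eq_right.2 hab]

theorem phiRel.contraction {u v : C} (huv : u ≤ v) (hab : phiRel σ x a b) :
    phiRel σ x (contraction u v a) (contraction u v b) := by
  wlog hle : a ≤ b generalizing a b
  · exact (this hab.symm (le_of_not_ge hle)).symm
  have hmono := contraction_monotone huv hle
  rcases contraction_eq_or_le_of_le huv hle with heq | ⟨ha, hb⟩
  · exact heq ▸ phiRel_refl _
  · refine hab.mono ?_ ?_
    · rwa [inf_eq_left.2 hle, inf_eq_left.2 hmono]
    · rwa [sup_eq_right.2 hle, sup_eq_right.2 hmono]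

/-- The shape of a forcing map: constant on `[e.2, e'.1]` and constant off it. -/
theorem phiRel.ite {e e' : PrimeInt C} {y z : C} (hyz : σ e ≤ x ∨ σ e' ≤ x → phiRel σ x y z)
    (hab : phiRel σ x a b) :
    phiRel σ x (if e.1.2 ≤ a ∧ a ≤ e'.1.1 then y else z)
      (if e.1.2 ≤ b ∧ b ≤ e'.1.1 then y else z) := by
  have hspan : ∀ {c d}, phiRel σ x c d → (e.1.2 ≤ c ∧ c ≤ e'.1.1) →
      ¬(e.1.2 ≤ d ∧ d ≤ e'.1.1) → σ e ≤ x ∨ σ e' ≤ x := fun hcd hc hd =>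
    (PrimeInt.spans_or_of_mem_of_not_mem hc hd).imp (fun h => hcd e h.1 h.2)
      (fun h => hcd e' h.1 h.2)
  split_ifs with ha hb hb
  · exact phiRel_refl y
  · exact hyz (hspan hab ha hb)
  · exact (hyz (hspan hab.symm hb ha)).symm
  · exact phiRel_refl z

theorem phiRel.forcing {p h : PrimeInt C} (hσ : σ h ≤ σ p) (hab : phiRel σ x a b) : phiRel σ x (forcing p h a) (forcing p h b) := by
  by_cases hph : p.1.2 ≤ h.1.1
  · simp only [_root_.forcing, if_pos hph]
    exact hab.ite fun hx => (phiRel_iff_of_covBy h).2 (hx.elim hσ.trans id)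
  · simp only [_root_.forcing, if_neg hph]
    exact hab.ite fun hx => ((phiRel_iff_of_covBy h).2 (hx.elim id hσ.trans)).symm

end Preorder

variable [Lattice D]

theorem isCong_phiRel (σ : PrimeInt C → D) (x : D) :
    IsCong (forcingAlg C σ) (phiRel σ x : C → C → Prop) := by
  refine ⟨phiRel_equivalence σ x, ?_⟩
  rintro (⟨⟨u, v⟩, huv⟩ | ⟨⟨p, h⟩, _, hσ⟩) a b hab
  · exact (hab ⟨0, Nat.one_pos⟩).contraction huv.le
  · exact (hab ⟨0, Nat.one_pos⟩).forcing hσ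

def phiCon (σ : PrimeInt C → D) (x : D) : AlgCon (forcingAlg C σ) :=
  ⟨(phiRel σ x : C → C → Prop), isCong_phiRel σ x⟩

theorem IsCong.forcingAlg_rel_of_le {σ : PrimeInt C → D} {r : C → C → Prop}
    (hr : IsCong (forcingAlg C σ) r) {p h : PrimeInt C} (hp : r p.1.1 p.1.2) (hσ : σ h ≤ σ p) :
    r h.1.1 h.1.2 := by
  by_cases hne : p = h
  · exact hne ▸ hp
  have := hr.2 (Sum.inr ⟨(p, h), hne, hσ⟩) (fun _ => p.1.1) (fun _ => p.1.2) (fun _ => hp)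
  change r (forcing p h p.1.1) (forcing p h p.1.2) at this
  rw [forcing_fst_of_ne hne, forcing_snd] at this
  exact hr.1.symm this

theorem IsCong.forcingAlg_rel_of_phiRel [Fintype C] {σ : PrimeInt C → D} {r : C → C → Prop}
    (hr : IsCong (forcingAlg C σ) r) {p : PrimeInt C} (hp : r p.1.1 p.1.2) {u v : C}
    (huv : phiRel σ (σ p) u v) : r u v := by
  have hequiv : Equivalence r := hr.1
  have : LocallyFiniteOrder C := Fintype.toLocallyFiniteOrder
  wlog hle : u ≤ v generalizing u v
  · exact hequiv.symm (this huv.symm (le_of_not_ge hle))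
  refine hequiv.rel_of_le_of_forall_covBy hle fun y z hyz hy hz => ?_
  exact hr.forcingAlg_rel_of_le (h := ⟨(y, z), hyz⟩) hp ((phiRel_iff_of_le hle).1 huv _ hy hz)

theorem algPrinc_forcingAlg_eq_phiCon [Fintype C] (σ : PrimeInt C → D) (p : PrimeInt C) :
    algPrinc (forcingAlg C σ) p.1.1 p.1.2 = phiCon σ (σ p) :=
  le_antisymm (algPrinc_le ((phiRel_iff_of_covBy p).2 le_rfl)) fun _ _ =>
    (algPrinc _ _ _).2.forcingAlg_rel_of_phiRel (algPrinc_rel _ _ _)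

end Phi

theorem stmt_15_general (C : Type) [LinearOrder C] [Fintype C]
    {D : Type} [DistribLattice D]
    (σ : PrimeInt C → D) :
    ∀ p : PrimeInt C, ∀ u v : C,
      (algPrinc (forcingAlg C σ) p.1.1 p.1.2).1 u v ↔
        ∀ q : PrimeInt C, u ⊓ v ≤ q.1.1 → q.1.2 ≤ u ⊔ v → σ q ≤ σ p := by
  intro p u v
  rw [algPrinc_forcingAlg_eq_phiCon σ p]
  rfl

/-- In the forcing algebra, the principal congruence generated by the endpoints of
a prime interval `p` is `φ(σ(p))`, where
`φ(x) = {(u,v) : σ(q) ≤ x for all prime intervals q of [u⊓v, u⊔v]}`. -/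
theorem stmt_15 (C : Type) [LinearOrder C] [Fintype C]
    {D : Type} [DistribLattice D] [Fintype D] [BoundedOrder D]
    (σ : PrimeInt C → D) (hJ : ∀ e : PrimeInt C, SupIrred (σ e))
    (hsurj : ∀ x : D, SupIrred x → ∃ e : PrimeInt C, σ e = x) :
    ∀ p : PrimeInt C, ∀ u v : C,
      (algPrinc (forcingAlg C σ) p.1.1 p.1.2).1 u v ↔
        ∀ q : PrimeInt C, u ⊓ v ≤ q.1.1 → q.1.2 ≤ u ⊔ v → σ q ≤ σ p :=
  stmt_15_general C σ
end

section
/- Let D be a finite distributive lattice in which J(D) contains a three-element antichain {p_0, p_1, p_2}, and let S be any subset of D that is closed under the following property: whenever r, q ∈ J(D) with r ∨ q ∈ S and r ∨ q join-reducible, then r ∨ q ∈ {p_0 ∨ p_1 ∨ p_2, 1_D}. Then in any surjectively J(D)-colored finite chain (C, σ) with represented set equal to J(D) ∪ {0, 1, p_0∨p_1∨p_2}, a contradiction arises; hence no such colored chain exists. -/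
open scoped Classical

/-! Take an interval of the chain representing `s = p₀ ⊔ p₁ ⊔ p₂` that cannot be shortened from
below without changing what it represents. Removing its lowest prime interval `e` leaves an
interval representing some `y < s`, so `s = σ e ⊔ y` where, by the shape of the represented set,
`y` is `⊥` or join-irreducible. But every join-irreducible below `s` lies below some `pᵢ`, so
`σ e ⊔ y ≤ pᵢ ⊔ pⱼ`, which misses the third element of the antichain. -/

section ColoredChain

variable {C D : Type} [LinearOrder C] [Fintype C] [Lattice D] [OrderBot D]

lemma chainRep_self (σ : PrimeInt C → D) (a : C) : chainRep σ a a = ⊥ := by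
  refine (Finset.sup_eq_bot_iff _ _).2 fun e he => ?_
  simp only [Finset.mem_filter, Finset.mem_univ, true_and] at he
  exact absurd (he.2.trans he.1) e.2.lt.not_ge

lemma chainRep_le_chainRep (σ : PrimeInt C → D) {a a' b b' : C} (ha : a ≤ a') (hb : b' ≤ b) :
    chainRep σ a' b' ≤ chainRep σ a b :=
  Finset.sup_mono fun e he => by
    simp only [Finset.mem_filter, Finset.mem_univ, true_and] at he ⊢
    exact ⟨ha.trans he.1, he.2.trans hb⟩

lemma chainRep_eq_sup_of_covBy (σ : PrimeInt C → D) {a a' b : C} (h : a ⋖ a') (hb : a' ≤ b) :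
    chainRep σ a b = σ ⟨(a, a'), h⟩ ⊔ chainRep σ a' b := by
  have hfilter : Finset.univ.filter (fun e : PrimeInt C => a ≤ e.1.1 ∧ e.1.2 ≤ b) =
      insert ⟨(a, a'), h⟩ (Finset.univ.filter fun e : PrimeInt C => a' ≤ e.1.1 ∧ e.1.2 ≤ b) := by
    ext e
    simp only [Finset.mem_filter, Finset.mem_univ, true_and, Finset.mem_insert]
    constructor
    · rintro ⟨hae, heb⟩
      rcases le_or_gt a' e.1.1 with ha'e | hea'
      · exact .inr ⟨ha'e, heb⟩
      · have he₁ : e.1.1 = a := le_antisymm (h.le_of_lt hea') hae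
        have he₂ : e.1.2 = a' := (he₁ ▸ e.2).unique_right h
        exact .inl (Subtype.ext (Prod.ext he₁ he₂))
    · rintro (rfl | ⟨ha'e, heb⟩)
      · exact ⟨le_rfl, hb⟩
      · exact ⟨h.le.trans ha'e, heb⟩
  rw [chainRep, hfilter, Finset.sup_insert]
  rfl

lemma exists_eq_sup_lt_of_mem_repSet (σ : PrimeInt C → D) {x : D} (hx : x ∈ repSet σ)
    (hx0 : x ≠ ⊥) : ∃ (e : PrimeInt C) (y : D), y ∈ repSet σ ∧ y < x ∧ x = σ e ⊔ y := by
  obtain ⟨a, b, hab, rfl⟩ := hx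
  obtain ⟨c, hc, hc_max⟩ := (Finset.univ.filter fun c => c ≤ b ∧ chainRep σ c b = chainRep σ a b)
    |>.exists_max_image id ⟨a, by simp [hab]⟩
  simp only [Finset.mem_filter, Finset.mem_univ, true_and, id] at hc hc_max
  obtain ⟨hcb, hc_eq⟩ := hc
  have hcb' : c < b := hcb.lt_of_ne fun h => hx0 (by rw [← hc_eq, h, chainRep_self])
  obtain ⟨c', hcc', hc'b⟩ := exists_covBy_le_of_lt hcb'
  refine ⟨⟨(c, c'), hcc'⟩, chainRep σ c' b, ⟨c', b, hc'b, rfl⟩,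
    (hc_eq ▸ chainRep_le_chainRep σ hcc'.le le_rfl).lt_of_ne fun h => ?_,
    hc_eq ▸ chainRep_eq_sup_of_covBy σ hcc' hc'b⟩
  exact (hc_max c' ⟨hc'b, h⟩).not_gt hcc'.lt

end ColoredChain

section ThreeAntichain

variable {D : Type} [DistribLattice D] {p₀ p₁ p₂ : D}

lemma SupPrime.le_or_le_or_le {r a b c : D} (hr : SupPrime r) (h : r ≤ a ⊔ b ⊔ c) :
    r ≤ a ∨ r ≤ b ∨ r ≤ c := by
  simpa only [hr.le_sup, or_assoc] using h

lemma not_sup_three_le_sup (h0 : SupPrime p₀) (h1 : SupPrime p₁) (h2 : SupPrime p₂)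
    (ha01 : ¬ p₀ ≤ p₁) (ha10 : ¬ p₁ ≤ p₀) (ha02 : ¬ p₀ ≤ p₂) (ha20 : ¬ p₂ ≤ p₀)
    (ha12 : ¬ p₁ ≤ p₂) (ha21 : ¬ p₂ ≤ p₁) {u v : D}
    (hu : u ≤ p₀ ∨ u ≤ p₁ ∨ u ≤ p₂) (hv : v ≤ p₀ ∨ v ≤ p₁ ∨ v ≤ p₂) :
    ¬ p₀ ⊔ p₁ ⊔ p₂ ≤ u ⊔ v := by
  intro h
  have hp₀ := h0.le_sup.1 ((le_sup_left.trans le_sup_left).trans h)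
  have hp₁ := h1.le_sup.1 ((le_sup_right.trans le_sup_left).trans h)
  have hp₂ := h2.le_sup.1 (le_sup_right.trans h)
  rcases hu with hu | hu | hu <;> rcases hv with hv | hv | hv <;>
    replace hp₀ := hp₀.imp (·.trans hu) (·.trans hv) <;>
    replace hp₁ := hp₁.imp (·.trans hu) (·.trans hv) <;>
    replace hp₂ := hp₂.imp (·.trans hu) (·.trans hv) <;>
    tauto

variable [OrderBot D]

lemma sup_ne_sup_three (h0 : SupIrred p₀) (h1 : SupIrred p₁) (h2 : SupIrred p₂)
    (ha01 : ¬ p₀ ≤ p₁) (ha10 : ¬ p₁ ≤ p₀) (ha02 : ¬ p₀ ≤ p₂) (ha20 : ¬ p₂ ≤ p₀)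
    (ha12 : ¬ p₁ ≤ p₂) (ha21 : ¬ p₂ ≤ p₁) {u v : D}
    (hu : u = ⊥ ∨ SupIrred u) (hv : v = ⊥ ∨ SupIrred v) :
    u ⊔ v ≠ p₀ ⊔ p₁ ⊔ p₂ := by
  intro h
  have below : ∀ {w}, w = ⊥ ∨ SupIrred w → w ≤ u ⊔ v → w ≤ p₀ ∨ w ≤ p₁ ∨ w ≤ p₂
    | _, .inl rfl, _ => .inl bot_le
    | _, .inr hw, hwle => hw.supPrime.le_or_le_or_le (h ▸ hwle)
  exact not_sup_three_le_sup h0.supPrime h1.supPrime h2.supPrime ha01 ha10 ha02 ha20 ha12 ha21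
    (below hu le_sup_left) (below hv le_sup_right) h.ge

end ThreeAntichain

theorem stmt_19_general {D : Type} [DistribLattice D] [BoundedOrder D]
    (p₀ p₁ p₂ : D) (h0 : SupIrred p₀) (h1 : SupIrred p₁) (h2 : SupIrred p₂)
    (ha01 : ¬ p₀ ≤ p₁) (ha10 : ¬ p₁ ≤ p₀) (ha02 : ¬ p₀ ≤ p₂) (ha20 : ¬ p₂ ≤ p₀)
    (ha12 : ¬ p₁ ≤ p₂) (ha21 : ¬ p₂ ≤ p₁)
    (C : Type) [LinearOrder C] [Fintype C]
    (σ : PrimeInt C → D) (hJ : ∀ e : PrimeInt C, SupIrred (σ e)) :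
    repSet σ ≠ {x : D | SupIrred x} ∪ {⊥, ⊤, p₀ ⊔ p₁ ⊔ p₂} := by
  intro hrep
  have hs : p₀ ⊔ p₁ ⊔ p₂ ∈ repSet σ := hrep ▸ Or.inr (by simp)
  have hs0 : p₀ ⊔ p₁ ⊔ p₂ ≠ ⊥ := ne_bot_of_le_ne_bot h0.ne_bot (le_sup_left.trans le_sup_left)
  obtain ⟨e, y, hy, hys, hsy⟩ := exists_eq_sup_lt_of_mem_repSet σ hs hs0
  have hy' : y = ⊥ ∨ SupIrred y := by
    rw [hrep] at hy
    rcases hy with hy | hy | hy | hy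
    · exact .inr hy
    · exact .inl hy
    · exact absurd (hy ▸ hys) not_top_lt
    · exact absurd hy hys.ne
  exact sup_ne_sup_three h0 h1 h2 ha01 ha10 ha02 ha20 ha12 ha21 (.inr (hJ e)) hy' hsy.symm

/-- Given a three-element antichain `{p₀, p₁, p₂}` of join-irreducibles in a finite
distributive lattice `D`, and any subset `S` of `D` such that every join-reducible
join `r ⊔ q` of two join-irreducibles lying in `S` equals `p₀ ⊔ p₁ ⊔ p₂` or `⊤`,
no surjectively `J(D)`-colored finite chain has represented set
`J(D) ∪ {⊥, ⊤, p₀ ⊔ p₁ ⊔ p₂}`. -/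
theorem stmt_19 {D : Type} [DistribLattice D] [Fintype D] [BoundedOrder D]
    (p₀ p₁ p₂ : D) (h0 : SupIrred p₀) (h1 : SupIrred p₁) (h2 : SupIrred p₂)
    (ha01 : ¬ p₀ ≤ p₁) (ha10 : ¬ p₁ ≤ p₀) (ha02 : ¬ p₀ ≤ p₂) (ha20 : ¬ p₂ ≤ p₀)
    (ha12 : ¬ p₁ ≤ p₂) (ha21 : ¬ p₂ ≤ p₁)
    (S : Set D)
    (hS : ∀ r q : D, SupIrred r → SupIrred q → r ⊔ q ∈ S →
      (∃ a b : D, a < r ⊔ q ∧ b < r ⊔ q ∧ a ⊔ b = r ⊔ q) →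
      r ⊔ q = p₀ ⊔ p₁ ⊔ p₂ ∨ r ⊔ q = ⊤)
    (C : Type) [LinearOrder C] [Fintype C] [Nonempty C]
    (σ : PrimeInt C → D) (hJ : ∀ e : PrimeInt C, SupIrred (σ e))
    (hsurj : ∀ x : D, SupIrred x → ∃ e : PrimeInt C, σ e = x) :
    repSet σ ≠ {x : D | SupIrred x} ∪ {⊥, ⊤, p₀ ⊔ p₁ ⊔ p₂} :=
  stmt_19_general p₀ p₁ p₂ h0 h1 h2 ha01 ha10 ha02 ha20 ha12 ha21 C σ hJ
end
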